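/- arXiv:1011.1515 — 3 statements merged into one kernel-verified Lean document; each statement's English description precedes it below -/
import Mathlib

section
/- If A is a symmetric positive semidefinite n×n matrix with tr(A) > 0 and B is a symmetric n×n matrix, then tr(A B²) ≥ (tr(AB))² / tr(A). -/
noncomputable section

/-- If `A` is symmetric positive semidefinite with `tr(A) > 0` and `B` is
symmetric, then `tr(AB²) ≥ (tr(AB))² / tr(A)`. -/
theorem trace_cauchy_schwarz_posSemidef (n : ℕ)
    (A B : Matrix (Fin n) (Fin n) ℝ)
    (hA : A.PosSemidef) (hAtr : 0 < A.trace) (hB : B.IsSymm) :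
    (A * B * B).trace ≥ (A * B).trace ^ 2 / A.trace := by
  set S := (open scoped MatrixOrder in CFC.sqrt A) with hS
  have hSsym : S.IsSymm := by
    have h := (open scoped MatrixOrder in (Matrix.nonneg_iff_posSemidef.mp (CFC.sqrt_nonneg A)).1)
    rwa [Matrix.IsHermitian, Matrix.conjTranspose_eq_transpose_of_trivial] at h
  have hSS : S * S = A := (open scoped MatrixOrder in CFC.sqrt_mul_sqrt_self A hA.nonneg)
  set C := S * B with hC
  -- trace A = ∑ (S i j)^2
  have htrA : A.trace = ∑ i, ∑ j, (S i j) ^ 2 := by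
    rw [← hSS, Matrix.trace, Finset.sum_congr rfl]
    intro i _
    rw [Matrix.diag_apply, Matrix.mul_apply]
    refine Finset.sum_congr rfl fun j _ => ?_
    rw [sq]
    congr 1
    exact (congrFun (congrFun hSsym.symm i) j).symm ▸ (Matrix.IsSymm.apply hSsym j i)
  -- trace (A*B) = ∑ S i j * C j i
  have htrAB : (A * B).trace = ∑ i, ∑ j, S i j * C j i := by
    rw [← hSS, mul_assoc, ← hC, Matrix.trace]
    refine Finset.sum_congr rfl fun i _ => ?_
    rw [Matrix.diag_apply, Matrix.mul_apply]
  -- trace (A*B*B) = ∑ (C j i)^2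
  have htrABB : (A * B * B).trace = ∑ i, ∑ j, (C j i) ^ 2 := by
    have h1 : A * B * B = S * (C * B) := by
      rw [← hSS, hC]; simp only [mul_assoc]
    have hCT : C.transpose = B * S := by
      rw [hC, Matrix.transpose_mul, hSsym.eq, hB.eq]
    rw [h1, Matrix.trace_mul_comm, mul_assoc, ← hCT, Matrix.trace]
    simp only [Matrix.diag_apply, Matrix.mul_apply, Matrix.transpose_apply, sq]
    exact Finset.sum_comm
  rw [ge_iff_le, div_le_iff₀ hAtr]
  calc (A * B).trace ^ 2
      = (∑ p : Fin n × Fin n, S p.1 p.2 * C p.2 p.1) ^ 2 := by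
        rw [htrAB, ← Finset.sum_product']
        rfl
    _ ≤ (∑ p : Fin n × Fin n, (S p.1 p.2) ^ 2) *
        (∑ p : Fin n × Fin n, (C p.2 p.1) ^ 2) :=
        Finset.sum_mul_sq_le_sq_mul_sq _ _ _
    _ = A.trace * (A * B * B).trace := by
        rw [htrA, htrABB, ← Finset.sum_product', ← Finset.sum_product']
        rfl
    _ = (A * B * B).trace * A.trace := mul_comm _ _
end
end

section
/- Let B = B(x₀, R) ⊆ ℝⁿ (n = 2N+1) and let k > 0 be a constant. If u is a Lipschitz continuous viscosity solution on the closed ball of -tr(Ã(Du)D²u) + k = 0, then R ≤ 1/k. -/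
noncomputable section

/-- The characteristic curvature operator
`𝒯φ(x) = tr(Ã(Dφ(x)) D²φ(x)) = (1+|Dφ|²)^{-3/2} σ(Dφ)ᵀ D²φ σ(Dφ)` on
`ℝ^(2N+1)` (coordinates indexed by `Fin N ⊕ Fin N ⊕ Unit`, grouped as
`(x,y,t)`), with `σ(p) = (-p_y, p_x, 1)`. -/
def charOp {N : ℕ} (φ : EuclideanSpace ℝ (Fin N ⊕ Fin N ⊕ Unit) → ℝ)
    (x : EuclideanSpace ℝ (Fin N ⊕ Fin N ⊕ Unit)) : ℝ :=
  let p : (Fin N ⊕ Fin N ⊕ Unit) → ℝ :=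
    fun i => fderiv ℝ φ x (EuclideanSpace.single i 1)
  let Hess : (Fin N ⊕ Fin N ⊕ Unit) → (Fin N ⊕ Fin N ⊕ Unit) → ℝ :=
    fun i j => fderiv ℝ (fun w => fderiv ℝ φ w (EuclideanSpace.single j 1)) x
      (EuclideanSpace.single i 1)
  let s : Fin N ⊕ Fin N ⊕ Unit → ℝ :=
    Sum.elim (fun i => -p (Sum.inr (Sum.inl i)))
      (Sum.elim (fun i => p (Sum.inl i)) fun _ => 1)
  (∑ i, ∑ j, s i * Hess i j * s j) / (1 + ∑ i, p i ^ 2) ^ ((3 : ℝ) / 2)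

namespace NonexAux

/-! ### A smooth positive cap function equal to the identity on `[ε, ∞)` -/

def cap (ε s : ℝ) : ℝ := ε/2 + (s - ε/2) * Real.smoothTransition ((s - ε/2)/(ε/2))

lemma cap_eq {ε s : ℝ} (hε : 0 < ε) (hs : ε ≤ s) : cap ε s = s := by
  unfold cap
  rw [Real.smoothTransition.one_of_one_le, mul_one]
  · ring
  · rw [le_div_iff₀ (by linarith)]; linarith

lemma cap_pos {ε : ℝ} (hε : 0 < ε) (s : ℝ) : 0 < cap ε s := by
  unfold cap
  rcases le_or_gt s (ε/2) with h | h
  · rw [Real.smoothTransition.zero_of_nonpos, mul_zero]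
    · linarith
    · apply div_nonpos_of_nonpos_of_nonneg <;> linarith
  · have := Real.smoothTransition.nonneg ((s - ε/2)/(ε/2))
    nlinarith

lemma contDiff_cap (ε : ℝ) : ContDiff ℝ 2 (cap ε) := by
  unfold cap
  exact contDiff_const.add ((contDiff_id.sub contDiff_const).mul
    (Real.smoothTransition.contDiff.comp ((contDiff_id.sub contDiff_const).div_const _)))

/-! ### The squared distance `S` and its derivative -/

variable {ι : Type*} [Fintype ι] [DecidableEq ι]

def S (c : EuclideanSpace ℝ ι) (x : EuclideanSpace ℝ ι) : ℝ := ∑ i, (x i - c i)^2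

def DS (c x : EuclideanSpace ℝ ι) : EuclideanSpace ℝ ι →L[ℝ] ℝ :=
  ∑ j, (2*(x j - c j)) • (EuclideanSpace.proj j : EuclideanSpace ℝ ι →L[ℝ] ℝ)

omit [DecidableEq ι] in
lemma hasFDerivAt_S (c x : EuclideanSpace ℝ ι) : HasFDerivAt (S c) (DS c x) x := by
  apply HasFDerivAt.fun_sum
  intro j _
  have h1 : HasFDerivAt (fun x : EuclideanSpace ℝ ι => x j - c j)
      (EuclideanSpace.proj j : EuclideanSpace ℝ ι →L[ℝ] ℝ) x := by
    simpa using ((EuclideanSpace.proj (𝕜 := ℝ) j).hasFDerivAt (x := x)).sub_const (c j)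
  have h2 : HasDerivAt (fun t : ℝ => t^2) (2*(x j - c j)) (x j - c j) := by
    simpa using (hasDerivAt_pow 2 (x j - c j))
  exact h2.comp_hasFDerivAt x h1

lemma DS_single (c x : EuclideanSpace ℝ ι) (j : ι) :
    DS c x (EuclideanSpace.single j 1) = 2*(x j - c j) := by
  unfold DS
  rw [ContinuousLinearMap.sum_apply]
  have : ∀ i, ((2*(x i - c i)) • (EuclideanSpace.proj i : EuclideanSpace ℝ ι →L[ℝ] ℝ))
      (EuclideanSpace.single j 1) = if i = j then 2*(x j - c j) else 0 := by
    intro i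
    simp only [ContinuousLinearMap.smul_apply, EuclideanSpace.proj, PiLp.proj_apply,
      EuclideanSpace.single_apply, smul_eq_mul]
    rcases eq_or_ne i j with h | h
    · subst h; simp
    · simp [EuclideanSpace.single_apply, h, Ne.symm h]
  rw [Finset.sum_congr rfl fun i _ => this i, Finset.sum_ite_eq']
  simp

lemma S_eq_dist (c x : EuclideanSpace ℝ ι) : S c x = (dist x c)^2 := by
  rw [EuclideanSpace.dist_eq, Real.sq_sqrt (by positivity)]
  unfold S
  congr 1; ext i; rw [Real.dist_eq, sq_abs]

omit [DecidableEq ι] in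
lemma contDiff_S (c : EuclideanSpace ℝ ι) : ContDiff ℝ 2 (S c) := by
  unfold S
  exact ContDiff.sum fun i _ =>
    (((EuclideanSpace.proj (𝕜 := ℝ) i).contDiff).sub contDiff_const).pow 2

/-! ### The test function `phi` and its first two derivatives -/

section Phi
variable (c : EuclideanSpace ℝ ι) (r ε : ℝ)

def tt (x : EuclideanSpace ℝ ι) : ℝ := r^2 - S c x

def phi (x : EuclideanSpace ℝ ι) : ℝ := -Real.sqrt (cap ε (tt c r x))

omit [DecidableEq ι] in
lemma continuous_tt : Continuous (tt c r) := by
  unfold tt S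
  exact continuous_const.sub (continuous_finset_sum _ fun i _ =>
    (((EuclideanSpace.proj (𝕜 := ℝ) i).continuous).sub continuous_const).pow 2)

omit [DecidableEq ι] in
lemma contDiff_phi (hε : 0 < ε) : ContDiff ℝ 2 (phi c r ε) := by
  rw [contDiff_iff_contDiffAt]
  intro x
  have h1 : ContDiffAt ℝ 2 (tt c r) x := (contDiff_const.sub (contDiff_S c)).contDiffAt
  have h2 : ContDiffAt ℝ 2 (fun x => cap ε (tt c r x)) x :=
    (contDiff_cap ε).contDiffAt.comp x h1
  exact ((Real.contDiffAt_sqrt (ne_of_gt (cap_pos hε _))).comp x h2).neg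

omit [DecidableEq ι] in
lemma isOpen_U : IsOpen {x : EuclideanSpace ℝ ι | ε < tt c r x} :=
  isOpen_lt continuous_const (continuous_tt c r)

omit [DecidableEq ι] in
lemma hasFDerivAt_tt (x : EuclideanSpace ℝ ι) :
    HasFDerivAt (tt c r) (-(DS c x)) x := by
  exact (hasFDerivAt_S c x).const_sub (r^2)

omit [DecidableEq ι] in
lemma fderiv_phi (hε : 0 < ε) {x : EuclideanSpace ℝ ι} (hx : ε < tt c r x) :
    fderiv ℝ (phi c r ε) x = (2 * Real.sqrt (tt c r x))⁻¹ • DS c x := by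
  have htpos : 0 < tt c r x := lt_trans hε hx
  have heq : phi c r ε =ᶠ[nhds x] (fun y => -Real.sqrt (tt c r y)) := by
    filter_upwards [(isOpen_U c r ε).mem_nhds hx] with y hy
    unfold phi
    rw [cap_eq hε (le_of_lt hy)]
  rw [heq.fderiv_eq]
  have hsq : HasDerivAt Real.sqrt (1/(2*Real.sqrt (tt c r x))) (tt c r x) :=
    Real.hasDerivAt_sqrt (ne_of_gt htpos)
  have h : HasFDerivAt (fun y => -Real.sqrt (tt c r y))
      (-((1/(2*Real.sqrt (tt c r x))) • -(DS c x))) x :=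
    (hsq.comp_hasFDerivAt x (hasFDerivAt_tt c r x)).neg
  rw [h.fderiv]
  ext v
  simp only [ContinuousLinearMap.neg_apply, ContinuousLinearMap.smul_apply, smul_eq_mul]
  ring

lemma fderiv_phi_single (hε : 0 < ε) {x : EuclideanSpace ℝ ι} (hx : ε < tt c r x) (j : ι) :
    fderiv ℝ (phi c r ε) x (EuclideanSpace.single j 1)
      = (x j - c j) / Real.sqrt (tt c r x) := by
  rw [fderiv_phi c r ε hε hx]
  have htpos : 0 < tt c r x := lt_trans hε hx
  have : Real.sqrt (tt c r x) ≠ 0 := by positivity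
  simp [DS_single]
  field_simp

lemma hess_phi (hε : 0 < ε) {x : EuclideanSpace ℝ ι} (hx : ε < tt c r x) (i j : ι) :
    fderiv ℝ (fun w => fderiv ℝ (phi c r ε) w (EuclideanSpace.single j 1)) x
      (EuclideanSpace.single i 1)
    = (x i - c i) * (x j - c j) / (tt c r x * Real.sqrt (tt c r x))
      + (if i = j then (Real.sqrt (tt c r x))⁻¹ else 0) := by
  have htpos : 0 < tt c r x := lt_trans hε hx
  have hsq : (0:ℝ) < Real.sqrt (tt c r x) := Real.sqrt_pos.2 htpos
  have heq : (fun w => fderiv ℝ (phi c r ε) w (EuclideanSpace.single j 1))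
      =ᶠ[nhds x] (fun w => (w j - c j) * (Real.sqrt (tt c r w))⁻¹) := by
    filter_upwards [(isOpen_U c r ε).mem_nhds hx] with y hy
    rw [fderiv_phi_single c r ε hε hy, div_eq_mul_inv]
  rw [heq.fderiv_eq]
  have hinv : HasDerivAt (fun s : ℝ => (Real.sqrt s)⁻¹)
      (-(1/(2*Real.sqrt (tt c r x)))/(Real.sqrt (tt c r x))^2) (tt c r x) :=
    (Real.hasDerivAt_sqrt (ne_of_gt htpos)).inv (ne_of_gt hsq)
  have h2 : HasFDerivAt (fun w => (Real.sqrt (tt c r w))⁻¹)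
      ((-(1/(2*Real.sqrt (tt c r x)))/(Real.sqrt (tt c r x))^2) • (-(DS c x))) x :=
    hinv.comp_hasFDerivAt x (hasFDerivAt_tt c r x)
  have h1 : HasFDerivAt (fun w : EuclideanSpace ℝ ι => w j - c j)
      (EuclideanSpace.proj j : EuclideanSpace ℝ ι →L[ℝ] ℝ) x := by
    simpa using ((EuclideanSpace.proj (𝕜 := ℝ) j).hasFDerivAt (x := x)).sub_const (c j)
  have hprod := h1.fun_mul' h2
  rw [hprod.fderiv]
  simp only [ContinuousLinearMap.add_apply, ContinuousLinearMap.smul_apply,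
    ContinuousLinearMap.neg_apply, ContinuousLinearMap.smulRight_apply, DS_single, smul_eq_mul, op_smul_eq_mul]
  have hproj : (EuclideanSpace.proj j : EuclideanSpace ℝ ι →L[ℝ] ℝ)
      (EuclideanSpace.single i 1) = if i = j then 1 else 0 := by
    simp only [EuclideanSpace.proj, PiLp.proj_apply, EuclideanSpace.single_apply]
    rcases eq_or_ne i j with h | h
    · subst h; simp
    · simp [h, Ne.symm h]
  rw [hproj]
  have h3 : Real.sqrt (tt c r x)^2 = tt c r x := Real.sq_sqrt (le_of_lt htpos)
  rcases eq_or_ne i j with h | h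
  · subst h; simp only [if_pos rfl]
    field_simp
    simp only [↓reduceIte, mul_one, h3]
    have h6 : Real.sqrt (tt c r x) * tt c r x * (1 / Real.sqrt (tt c r x)) = tt c r x := by
      field_simp
    rw [h6]
    ring
  · simp only [if_neg h, mul_zero, add_zero]
    field_simp
    rw [h3]
    ring

end Phi

/-! ### Algebra: the characteristic curvature of the sphere is `1/r` -/

lemma scalar_alg (r q A B C t : ℝ) (hr : 0 < r) (hq : 0 < q) (hA : A = Real.sqrt q)
    (hsum : B + C + t^2 = r^2 - q) :
    (t*(t/(q*A)) + (1+(B+C)/q) * A⁻¹) / (1 + (B+C+t^2)/q)^((3:ℝ)/2) = 1/r := by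
  have hApos : 0 < A := hA ▸ Real.sqrt_pos.2 hq
  have hA2 : A^2 = q := by rw [hA]; exact Real.sq_sqrt hq.le
  have hbase : 1 + (B+C+t^2)/q = (r/A)^2 := by
    field_simp
    nlinarith [hA2, hsum]
  rw [hbase]
  have hrA : (0:ℝ) ≤ r/A := by positivity
  have hpow : ((r/A)^2) ^ ((3:ℝ)/2) = (r/A)^3 := by
    rw [← Real.rpow_natCast (r/A) 2, ← Real.rpow_mul hrA]
    norm_num
  rw [hpow]
  have hnum : t*(t/(q*A)) + (1+(B+C)/q) * A⁻¹ = r^2/(q*A) := by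
    field_simp
    nlinarith [hA2, hsum]
  rw [hnum]
  rw [div_pow, div_eq_div_iff (by positivity) (by positivity)]
  field_simp
  linear_combination hA2

lemma sum_alg {N : ℕ} (a : (Fin N ⊕ Fin N ⊕ Unit) → ℝ) (r q A : ℝ)
    (hr : 0 < r) (hq : 0 < q) (hA : A = Real.sqrt q)
    (hsum : ∑ i, a i ^ 2 = r^2 - q) :
    (∑ i, ∑ j,
        (Sum.elim (fun i => -(a (Sum.inr (Sum.inl i)) / A))
          (Sum.elim (fun i => a (Sum.inl i) / A) fun _ => 1)) i
        * (a i * a j / (q*A) + (if i = j then A⁻¹ else 0))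
        * (Sum.elim (fun i => -(a (Sum.inr (Sum.inl i)) / A))
          (Sum.elim (fun i => a (Sum.inl i) / A) fun _ => 1)) j)
      / (1 + ∑ i, (a i / A) ^ 2) ^ ((3:ℝ)/2) = 1/r := by
  have hApos : 0 < A := hA ▸ Real.sqrt_pos.2 hq
  set s : (Fin N ⊕ Fin N ⊕ Unit) → ℝ :=
    Sum.elim (fun i => -(a (Sum.inr (Sum.inl i)) / A))
      (Sum.elim (fun i => a (Sum.inl i) / A) fun _ => 1) with hs
  set t : ℝ := a (Sum.inr (Sum.inr ())) with ht
  set B : ℝ := ∑ i : Fin N, a (Sum.inl i) ^ 2 with hB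
  set C : ℝ := ∑ i : Fin N, a (Sum.inr (Sum.inl i)) ^ 2 with hC
  have key1 : ∑ j, a j * s j = t := by
    rw [Fintype.sum_sum_type, Fintype.sum_sum_type]
    simp only [hs, Sum.elim_inl, Sum.elim_inr]
    have hcancel : (∑ i : Fin N, a (Sum.inl i) * -(a (Sum.inr (Sum.inl i)) / A))
        + (∑ i : Fin N, a (Sum.inr (Sum.inl i)) * (a (Sum.inl i) / A)) = 0 := by
      rw [← Finset.sum_add_distrib]
      apply Finset.sum_eq_zero
      intro i _
      ring
    have hunit : ∑ u : Unit, a (Sum.inr (Sum.inr u)) * 1 = t := by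
      simp [ht]
    linarith [hcancel, hunit]
  have key1' : ∑ j, s j * a j = t := by
    rw [← key1]; exact Finset.sum_congr rfl fun j _ => mul_comm _ _
  have key2 : ∑ i, s i ^ 2 = 1 + (B + C)/q := by
    rw [Fintype.sum_sum_type, Fintype.sum_sum_type]
    simp only [hs, Sum.elim_inl, Sum.elim_inr]
    have h1 : ∑ i : Fin N, (-(a (Sum.inr (Sum.inl i)) / A))^2 = C / A^2 := by
      rw [hC, Finset.sum_div]
      exact Finset.sum_congr rfl fun i _ => by field_simp
    have h2 : ∑ i : Fin N, (a (Sum.inl i) / A)^2 = B / A^2 := by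
      rw [hB, Finset.sum_div]
      exact Finset.sum_congr rfl fun i _ => by field_simp
    have h3 : ∑ u : Unit, (1:ℝ)^2 = 1 := by simp
    have hA2 : A^2 = q := by rw [hA]; exact Real.sq_sqrt hq.le
    rw [h1, h2, h3, hA2]
    ring
  have key3 : ∑ i, (a i / A) ^ 2 = (B + C + t^2)/q := by
    have hA2 : A^2 = q := by rw [hA]; exact Real.sq_sqrt hq.le
    have hdiv : ∑ i, (a i / A) ^ 2 = (∑ i, a i ^2) / A^2 := by
      rw [Finset.sum_div]
      exact Finset.sum_congr rfl fun i _ => by field_simp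
    rw [hdiv, hA2, hsum]
    congr 1
    rw [Fintype.sum_sum_type, Fintype.sum_sum_type] at hsum
    have hunit : ∑ u : Unit, a (Sum.inr (Sum.inr u)) ^ 2 = t^2 := by simp [ht]
    rw [hunit] at hsum
    linarith [hsum]
  have inner : ∀ i, (∑ j, s i * (a i * a j / (q*A) + (if i = j then A⁻¹ else 0)) * s j)
      = (s i * a i) * (t/(q*A)) + s i^2 * A⁻¹ := by
    intro i
    have hterm : ∀ j, s i * (a i * a j / (q*A) + (if i = j then A⁻¹ else 0)) * s j
        = (s i * a i /(q*A)) * (a j * s j) + (if i = j then s i * A⁻¹ * s j else 0) := by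
      intro j
      split <;> ring
    rw [Finset.sum_congr rfl fun j _ => hterm j, Finset.sum_add_distrib, ← Finset.mul_sum,
      key1, Finset.sum_ite_eq]
    simp only [Finset.mem_univ, if_pos]
    ring
  rw [Finset.sum_congr rfl fun i _ => inner i, Finset.sum_add_distrib, ← Finset.sum_mul,
    ← Finset.sum_mul, key1', key2, key3]
  have hBC : B + C + t ^ 2 = r ^ 2 - q := by
    rw [← hsum, Fintype.sum_sum_type, Fintype.sum_sum_type]
    have hunit : ∑ u : Unit, a (Sum.inr (Sum.inr u)) ^ 2 = t^2 := by simp [ht]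
    rw [hunit, ← hB, ← hC]
    ring
  exact scalar_alg r q A B C t hr hq hA hBC

end NonexAux

namespace NonexAux

lemma charOp_phi {N : ℕ} (c : EuclideanSpace ℝ (Fin N ⊕ Fin N ⊕ Unit)) (r ε : ℝ)
    (hr : 0 < r) (hε : 0 < ε) {xb : EuclideanSpace ℝ (Fin N ⊕ Fin N ⊕ Unit)}
    (hx : ε < tt c r xb) :
    charOp (phi c r ε) xb = 1/r := by
  have hq : 0 < tt c r xb := lt_trans hε hx
  have hSxb : ∑ i, (xb i - c i) ^ 2 = r^2 - tt c r xb := by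
    unfold tt S; ring
  have hp : ∀ i, fderiv ℝ (phi c r ε) xb (EuclideanSpace.single i 1)
      = (xb i - c i) / Real.sqrt (tt c r xb) := fun i => fderiv_phi_single c r ε hε hx i
  have hH : ∀ i j, fderiv ℝ (fun w => fderiv ℝ (phi c r ε) w (EuclideanSpace.single j 1)) xb
      (EuclideanSpace.single i 1)
      = (xb i - c i) * (xb j - c j) / (tt c r xb * Real.sqrt (tt c r xb))
        + (if i = j then (Real.sqrt (tt c r xb))⁻¹ else 0) :=
    fun i j => hess_phi c r ε hε hx i j
  unfold charOp
  simp only [hp, hH]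
  exact sum_alg (fun i => xb i - c i) r (tt c r xb) (Real.sqrt (tt c r xb)) hr hq rfl hSxb

end NonexAux

set_option maxHeartbeats 1000000 in
open NonexAux in
/-- Non-existence on large balls: if `k > 0` is constant and `u` is a Lipschitz
continuous viscosity solution of `-tr(Ã(Du)D²u) + k = 0` on the closed ball
`B̄(x₀,R)`, then necessarily `R ≤ 1/k`. -/
theorem nonexistence_on_large_balls (N : ℕ) (R k : ℝ) (hR : 0 < R) (hk : 0 < k)
    (x₀ : EuclideanSpace ℝ (Fin N ⊕ Fin N ⊕ Unit))
    (u : EuclideanSpace ℝ (Fin N ⊕ Fin N ⊕ Unit) → ℝ)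
    (L : NNReal) (hu : LipschitzOnWith L u (Metric.closedBall x₀ R))
    (hsub : ∀ φ : EuclideanSpace ℝ (Fin N ⊕ Fin N ⊕ Unit) → ℝ, ContDiff ℝ 2 φ →
      ∀ xb ∈ Metric.ball x₀ R,
        IsLocalMaxOn (fun x => u x - φ x) (Metric.ball x₀ R) xb →
        -charOp φ xb + k ≤ 0)
    (hsup : ∀ φ : EuclideanSpace ℝ (Fin N ⊕ Fin N ⊕ Unit) → ℝ, ContDiff ℝ 2 φ →
      ∀ xb ∈ Metric.ball x₀ R,
        IsLocalMinOn (fun x => u x - φ x) (Metric.ball x₀ R) xb →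
        0 ≤ -charOp φ xb + k) :
    R ≤ 1 / k := by
  classical
  -- the function to maximize
  set g : EuclideanSpace ℝ (Fin N ⊕ Fin N ⊕ Unit) → ℝ :=
    fun x => u x + Real.sqrt (tt x₀ R x) with hg
  have hgc : ContinuousOn g (Metric.closedBall x₀ R) :=
    hu.continuousOn.add ((Real.continuous_sqrt.comp (continuous_tt x₀ R)).continuousOn)
  obtain ⟨xb, hxbmem, hmax⟩ := (isCompact_closedBall x₀ R).exists_isMaxOn
    ⟨x₀, Metric.mem_closedBall_self hR.le⟩ hgc
  set d : ℝ := dist xb x₀ with hd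
  have hdR : d ≤ R := Metric.mem_closedBall.1 hxbmem
  have hd0 : 0 ≤ d := dist_nonneg
  set q : ℝ := tt x₀ R xb with hqdef
  have hqd : q = R^2 - d^2 := by
    rw [hqdef]; unfold tt
    rw [S_eq_dist]
  have hq0 : 0 ≤ q := by nlinarith
  -- Step 1: q is bounded below
  have hqlow : R^2/(1+(L:ℝ)^2) ≤ q := by
    rcases eq_or_lt_of_le hd0 with hd0' | hdpos
    · have : q = R^2 := by rw [hqd, ← hd0']; ring
      rw [this]
      rw [div_le_iff₀ (by positivity)]
      nlinarith [sq_nonneg (L:ℝ), sq_nonneg R]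
    · -- key inequality: for all τ ∈ (0, d], 2d ≤ 2L√q + (1+L²)τ
      have key : ∀ τ : ℝ, 0 < τ → τ ≤ d → 2*d ≤ 2*(L:ℝ)*Real.sqrt q + (1+(L:ℝ)^2)*τ := by
        intro τ hτ0 hτd
        set x' : EuclideanSpace ℝ (Fin N ⊕ Fin N ⊕ Unit) :=
          x₀ + (1 - τ/d) • (xb - x₀) with hx'
        have hsub1 : x' - x₀ = (1 - τ/d) • (xb - x₀) := by
          rw [hx', add_sub_cancel_left]
        have hsub2 : x' - xb = (-(τ/d)) • (xb - x₀) := by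
          rw [hx']; module
        have hnorm : ‖xb - x₀‖ = d := by rw [hd, dist_eq_norm]
        have hdist1 : dist x' x₀ = d - τ := by
          rw [dist_eq_norm, hsub1, norm_smul, hnorm, Real.norm_eq_abs,
            abs_of_nonneg (by rw [sub_nonneg, div_le_one hdpos]; exact hτd)]
          field_simp
        have hdist2 : dist x' xb = τ := by
          rw [dist_eq_norm, hsub2, norm_smul, hnorm, Real.norm_eq_abs, abs_neg,
            abs_of_nonneg (by positivity)]
          field_simp
        have hx'mem : x' ∈ Metric.closedBall x₀ R := by
          rw [Metric.mem_closedBall, hdist1]; linarith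
        have hgle : g x' ≤ g xb := hmax hx'mem
        have hlip : dist (u x') (u xb) ≤ (L:ℝ) * τ := by
          have := hu.dist_le_mul x' hx'mem xb hxbmem
          rwa [hdist2] at this
        have hudiff : u xb - u x' ≤ (L:ℝ) * τ := by
          have := abs_le.1 (by rwa [Real.dist_eq] at hlip)
          linarith [this.1]
        have htx' : tt x₀ R x' = R^2 - (d-τ)^2 := by
          unfold tt
          rw [S_eq_dist, hdist1]
        have hsqle : Real.sqrt (tt x₀ R x') ≤ Real.sqrt q + (L:ℝ)*τ := by
          have h1 : Real.sqrt (tt x₀ R x') - Real.sqrt q ≤ u xb - u x' := by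
            have := hgle
            rw [hg] at this
            simp only at this
            linarith [this]
          linarith [h1, hudiff]
        have httnn : 0 ≤ tt x₀ R x' := by
          rw [htx']; nlinarith
        have hsq : tt x₀ R x' ≤ (Real.sqrt q + (L:ℝ)*τ)^2 := by
          have h0 : 0 ≤ Real.sqrt q + (L:ℝ)*τ := by positivity
          calc tt x₀ R x' = (Real.sqrt (tt x₀ R x'))^2 := (Real.sq_sqrt httnn).symm
            _ ≤ (Real.sqrt q + (L:ℝ)*τ)^2 := by
                apply pow_le_pow_left₀ (Real.sqrt_nonneg _) hsqle
        have hqq : (Real.sqrt q)^2 = q := Real.sq_sqrt hq0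
        rw [htx'] at hsq
        have hexp : 2*d*τ - τ^2 ≤ 2*(L:ℝ)*τ*Real.sqrt q + (L:ℝ)^2*τ^2 := by
          nlinarith [hsq, hqq, hqd]
        have hdiv : 2*d - τ ≤ 2*(L:ℝ)*Real.sqrt q + (L:ℝ)^2*τ := by
          have h' := hexp
          rw [show 2*d*τ - τ^2 = (2*d - τ)*τ by ring,
            show 2*(L:ℝ)*τ*Real.sqrt q + (L:ℝ)^2*τ^2 = (2*(L:ℝ)*Real.sqrt q + (L:ℝ)^2*τ)*τ
              by ring] at h'
          exact le_of_mul_le_mul_right h' hτ0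
        linarith
      -- pass to the limit τ → 0⁺
      have h2d : 2*d ≤ 2*(L:ℝ)*Real.sqrt q := by
        by_contra hcon
        push_neg at hcon
        set δ : ℝ := 2*d - 2*(L:ℝ)*Real.sqrt q with hδ
        have hδ0 : 0 < δ := by linarith
        set τ : ℝ := min d (δ/(2*(1+(L:ℝ)^2))) with hτ
        have hτ0 : 0 < τ := lt_min hdpos (by positivity)
        have hτd : τ ≤ d := min_le_left _ _
        have h1 := key τ hτ0 hτd
        have h2 : (1+(L:ℝ)^2)*τ ≤ δ/2 := by
          have : τ ≤ δ/(2*(1+(L:ℝ)^2)) := min_le_right _ _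
          rw [le_div_iff₀ (by positivity)] at this
          linarith [this]
        linarith
      have hdsq : d^2 ≤ (L:ℝ)^2 * q := by
        have hs : 0 ≤ Real.sqrt q := Real.sqrt_nonneg q
        have hqq : (Real.sqrt q)^2 = q := Real.sq_sqrt hq0
        nlinarith [h2d]
      rw [div_le_iff₀ (by positivity)]
      nlinarith [hdsq]
  have hqpos : 0 < q := lt_of_lt_of_le (by positivity) hqlow
  -- xb is in the open ball
  have hxball : xb ∈ Metric.ball x₀ R := by
    rw [Metric.mem_ball]
    nlinarith [hqd, hqpos, hd0]
  -- the test function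
  set ε : ℝ := q/2 with hε
  have hεpos : 0 < ε := by positivity
  have hεq : ε < tt x₀ R xb := by rw [← hqdef, hε]; linarith
  set φ : EuclideanSpace ℝ (Fin N ⊕ Fin N ⊕ Unit) → ℝ := phi x₀ R ε with hφ
  have hφc : ContDiff ℝ 2 φ := contDiff_phi x₀ R ε hεpos
  -- local maximum of u - φ at xb
  have hlocmax : IsLocalMaxOn (fun x => u x - φ x) (Metric.ball x₀ R) xb := by
    have hU : {x : EuclideanSpace ℝ (Fin N ⊕ Fin N ⊕ Unit) | ε < tt x₀ R x}
        ∈ nhds xb := (isOpen_U x₀ R ε).mem_nhds hεq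
    have hφxb : φ xb = -Real.sqrt q := by
      rw [hφ]; unfold phi
      rw [← hqdef, cap_eq hεpos (by linarith)]
    unfold IsLocalMaxOn IsMaxFilter
    filter_upwards [mem_nhdsWithin_of_mem_nhds hU, self_mem_nhdsWithin] with x hx1 hx2
    have hx2' : x ∈ Metric.closedBall x₀ R := Metric.ball_subset_closedBall hx2
    have hφx : φ x = -Real.sqrt (tt x₀ R x) := by
      rw [hφ]; unfold phi
      rw [cap_eq hεpos (le_of_lt hx1)]
    have hgle : g x ≤ g xb := hmax hx2'
    rw [hg] at hgle
    simp only at hgle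
    simp only [hφx, hφxb]
    rw [← hqdef] at hgle
    linarith [hgle]
  -- conclude
  have hle := hsub φ hφc xb hxball hlocmax
  rw [hφ, charOp_phi x₀ R ε hR hεpos hεq] at hle
  have hk1 : k ≤ 1/R := by linarith
  rw [le_div_iff₀ hR] at hk1
  rw [le_div_iff₀ hk]
  linarith [hk1]
end
end

section
/- On the ball B = B(0,R) ⊂ ℝⁿ (n = 2N+1, coordinates (x₁,…,xₙ) grouped as (x,y,t) with t = xₙ), the two functions u(x) = -√(R² - xₙ²) and v(x) = -√(R² - |x|²) satisfy 𝒯u = 𝒯v = 1/R throughout B, u ≤ v on B, and u(x) = v(x) at every point of the form (0,…,0,xₙ) — hence the Strong Comparison Principle fails for the characteristic curvature operator 𝒯. -/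
noncomputable section

/- ### Auxiliary scalar calculus lemmas -/

lemma lemA {c t : ℝ} (h : t ^ 2 < c) :
    HasDerivAt (fun s : ℝ => -Real.sqrt (c - s ^ 2)) (t / Real.sqrt (c - t ^ 2)) t := by
  have hpos : 0 < c - t ^ 2 := by linarith
  have h1 : HasDerivAt (fun s : ℝ => c - s ^ 2) (-(2 * t)) t := by
    simpa using ((hasDerivAt_pow 2 t).const_sub c)
  have h2 := (h1.sqrt (ne_of_gt hpos)).neg
  refine h2.congr_deriv (Eq.symm ?_)
  have hs : Real.sqrt (c - t ^ 2) ≠ 0 := by positivity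
  field_simp

lemma lemB {c t : ℝ} (h : t ^ 2 < c) :
    HasDerivAt (fun s : ℝ => s / Real.sqrt (c - s ^ 2))
      (c / (Real.sqrt (c - t ^ 2)) ^ 3) t := by
  have hpos : 0 < c - t ^ 2 := by linarith
  have hs : (0:ℝ) < Real.sqrt (c - t ^ 2) := Real.sqrt_pos.2 hpos
  have h1 : HasDerivAt (fun s : ℝ => c - s ^ 2) (-(2 * t)) t := by
    simpa using ((hasDerivAt_pow 2 t).const_sub c)
  have h2 := h1.sqrt (ne_of_gt hpos)
  have h3 := (hasDerivAt_id t).div h2 (ne_of_gt hs)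
  refine h3.congr_deriv (Eq.symm ?_)
  have hsq : Real.sqrt (c - t ^ 2) ^ 2 = c - t ^ 2 := Real.sq_sqrt hpos.le
  simp only [id]
  field_simp
  linear_combination -hsq

lemma lemC {c s : ℝ} (h : s < c) :
    HasDerivAt (fun r : ℝ => -Real.sqrt (c - r)) (1 / (2 * Real.sqrt (c - s))) s := by
  have h1 : HasDerivAt (fun r : ℝ => c - r) (-1) s := by
    simpa using (hasDerivAt_id s).const_sub c
  have h2 := (h1.sqrt (by linarith : c - s ≠ 0)).neg
  refine h2.congr_deriv (Eq.symm ?_)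
  field_simp

lemma lemD {c s : ℝ} (h : s < c) :
    HasDerivAt (fun r : ℝ => (Real.sqrt (c - r))⁻¹)
      ((2 * (Real.sqrt (c - s)) ^ 3)⁻¹) s := by
  have hpos : 0 < c - s := by linarith
  have hs : (0:ℝ) < Real.sqrt (c - s) := Real.sqrt_pos.2 hpos
  have h1 : HasDerivAt (fun r : ℝ => c - r) (-1) s := by
    simpa using (hasDerivAt_id s).const_sub c
  have h2 := (h1.sqrt (ne_of_gt hpos)).inv (ne_of_gt hs)
  refine h2.congr_deriv (Eq.symm ?_)
  have hsq : Real.sqrt (c - s) ^ 2 = c - s := Real.sq_sqrt hpos.le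
  field_simp

lemma rpow_helper {a : ℝ} (ha : 0 ≤ a) : (a ^ 2 : ℝ) ^ ((3:ℝ)/2) = a ^ 3 := by
  rw [← Real.rpow_natCast a 2, ← Real.rpow_mul ha, ← Real.rpow_natCast a 3]
  norm_num

section Aux

variable {N : ℕ}
local notation "E" => EuclideanSpace ℝ (Fin N ⊕ Fin N ⊕ Unit)

lemma norm_sq_eq (x : E) : ‖x‖ ^ 2 = ∑ i, x i ^ 2 := by
  rw [EuclideanSpace.norm_eq, Real.sq_sqrt (by positivity)]
  simp [Real.norm_eq_abs, sq_abs]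

/- ### First and second derivatives of `u` and `v` -/

lemma hasFDerivAt_u (R : ℝ) (y : E) (h : (y (Sum.inr (Sum.inr ()))) ^ 2 < R ^ 2) :
    HasFDerivAt (fun x : E => -Real.sqrt (R ^ 2 - (x (Sum.inr (Sum.inr ()))) ^ 2))
      ((y (Sum.inr (Sum.inr ())) / Real.sqrt (R ^ 2 - (y (Sum.inr (Sum.inr ()))) ^ 2)) •
        (EuclideanSpace.proj (Sum.inr (Sum.inr ()) : Fin N ⊕ Fin N ⊕ Unit) : E →L[ℝ] ℝ)) y := by
  have hproj : HasFDerivAt (fun x : E => x (Sum.inr (Sum.inr ())))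
      (EuclideanSpace.proj (Sum.inr (Sum.inr ()) : Fin N ⊕ Fin N ⊕ Unit) : E →L[ℝ] ℝ) y :=
    ((EuclideanSpace.proj (Sum.inr (Sum.inr ()) : Fin N ⊕ Fin N ⊕ Unit) : E →L[ℝ] ℝ)).hasFDerivAt (x := y)
  have h1 := (lemA h).comp_hasFDerivAt y hproj
  exact h1

lemma hasFDerivAt_uderiv (R : ℝ) (y : E) (h : (y (Sum.inr (Sum.inr ()))) ^ 2 < R ^ 2) :
    HasFDerivAt (fun x : E => x (Sum.inr (Sum.inr ())) /
        Real.sqrt (R ^ 2 - (x (Sum.inr (Sum.inr ()))) ^ 2))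
      ((R ^ 2 / (Real.sqrt (R ^ 2 - (y (Sum.inr (Sum.inr ()))) ^ 2)) ^ 3) •
        (EuclideanSpace.proj (Sum.inr (Sum.inr ()) : Fin N ⊕ Fin N ⊕ Unit) : E →L[ℝ] ℝ)) y := by
  have hproj : HasFDerivAt (fun x : E => x (Sum.inr (Sum.inr ())))
      (EuclideanSpace.proj (Sum.inr (Sum.inr ()) : Fin N ⊕ Fin N ⊕ Unit) : E →L[ℝ] ℝ) y :=
    ((EuclideanSpace.proj (Sum.inr (Sum.inr ()) : Fin N ⊕ Fin N ⊕ Unit) : E →L[ℝ] ℝ)).hasFDerivAt (x := y)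
  have h1 := (lemB h).comp_hasFDerivAt y hproj
  exact h1

lemma hasFDerivAt_v (R : ℝ) (y : E) (h : ‖y‖ ^ 2 < R ^ 2) :
    HasFDerivAt (fun x : E => -Real.sqrt (R ^ 2 - ‖x‖ ^ 2))
      ((Real.sqrt (R ^ 2 - ‖y‖ ^ 2))⁻¹ • (innerSL ℝ y : E →L[ℝ] ℝ)) y := by
  have h0 : HasFDerivAt (fun x : E => ‖x‖ ^ 2) (2 • innerSL ℝ y) y :=
    (hasStrictFDerivAt_norm_sq y).hasFDerivAt
  have h1 := (lemC h).comp_hasFDerivAt y h0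
  have h2 : (1 / (2 * Real.sqrt (R ^ 2 - ‖y‖ ^ 2))) • ((2:ℕ) • innerSL ℝ y : E →L[ℝ] ℝ)
      = (Real.sqrt (R ^ 2 - ‖y‖ ^ 2))⁻¹ • (innerSL ℝ y : E →L[ℝ] ℝ) := by
    ext z
    have hs : (0:ℝ) < Real.sqrt (R ^ 2 - ‖y‖ ^ 2) := Real.sqrt_pos.2 (by nlinarith [sq_nonneg ‖y‖])
    simp [smul_smul]
    ring
  rw [← h2]
  exact h1

lemma hasFDerivAt_vderiv (R : ℝ) (j : Fin N ⊕ Fin N ⊕ Unit) (y : E) (h : ‖y‖ ^ 2 < R ^ 2) :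
    HasFDerivAt (fun x : E => (Real.sqrt (R ^ 2 - ‖x‖ ^ 2))⁻¹ * x j)
      (((Real.sqrt (R ^ 2 - ‖y‖ ^ 2))⁻¹ •
          (EuclideanSpace.proj j : E →L[ℝ] ℝ)) +
        (y j * ((Real.sqrt (R ^ 2 - ‖y‖ ^ 2)) ^ 3)⁻¹) • (innerSL ℝ y : E →L[ℝ] ℝ)) y := by
  have h0 : HasFDerivAt (fun x : E => ‖x‖ ^ 2) (2 • innerSL ℝ y) y :=
    (hasStrictFDerivAt_norm_sq y).hasFDerivAt
  have hA := (lemD h).comp_hasFDerivAt y h0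
  have hB : HasFDerivAt (fun x : E => x j)
      (EuclideanSpace.proj j : E →L[ℝ] ℝ) y :=
    ((EuclideanSpace.proj j : E →L[ℝ] ℝ)).hasFDerivAt (x := y)
  have h1 := hA.mul hB
  have hs : (0:ℝ) < Real.sqrt (R ^ 2 - ‖y‖ ^ 2) := Real.sqrt_pos.2 (by nlinarith [sq_nonneg ‖y‖])
  refine h1.congr_fderiv (Eq.symm ?_)
  ext z
  simp [smul_smul, Function.comp]
  field_simp

/- ### Algebraic helpers for the sums -/

lemma sum_quad (s xv : (Fin N ⊕ Fin N ⊕ Unit) → ℝ) (a b : ℝ) :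
    ∑ i, ∑ j, s i * ((if j = i then a else 0) + xv j * xv i * b) * s j
      = a * (∑ i, s i ^ 2) + b * (∑ i, s i * xv i) ^ 2 := by
  have key : ∀ i : Fin N ⊕ Fin N ⊕ Unit,
      ∑ j, s i * ((if j = i then a else 0) + xv j * xv i * b) * s j
        = a * s i ^ 2 + (s i * xv i) * b * (∑ j, s j * xv j) := by
    intro i
    have h1 : ∀ j : Fin N ⊕ Fin N ⊕ Unit,
        s i * ((if j = i then a else 0) + xv j * xv i * b) * s j
          = (if j = i then a * s i * s j else 0) + (s i * xv i * b) * (s j * xv j) := by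
      intro j; split <;> ring
    rw [Finset.sum_congr rfl (fun j _ => h1 j), Finset.sum_add_distrib,
      Finset.sum_ite_eq' Finset.univ i (fun j => a * s i * s j),
      if_pos (Finset.mem_univ i), ← Finset.mul_sum]
    ring
  rw [Finset.sum_congr rfl (fun i _ => key i), Finset.sum_add_distrib, ← Finset.mul_sum,
    ← Finset.sum_mul, ← Finset.sum_mul]
  ring

lemma S1_lemma (x : E) (c : ℝ) :
    (∑ i : Fin N ⊕ Fin N ⊕ Unit, Sum.elim (fun i => -(c * x (Sum.inr (Sum.inl i))))
      (Sum.elim (fun i => c * x (Sum.inl i)) (fun _ => (1:ℝ))) i * x i)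
      = x (Sum.inr (Sum.inr ())) := by
  simp only [Fintype.sum_sum_type, Sum.elim_inl, Sum.elim_inr]
  have h : ∑ a : Fin N, -(c * x (Sum.inr (Sum.inl a))) * x (Sum.inl a)
      = -∑ a : Fin N, c * x (Sum.inl a) * x (Sum.inr (Sum.inl a)) := by
    rw [← Finset.sum_neg_distrib]
    exact Finset.sum_congr rfl fun a _ => by ring
  rw [h]
  simp

lemma S2_lemma (x : E) (c : ℝ) :
    (∑ i : Fin N ⊕ Fin N ⊕ Unit, Sum.elim (fun i => -(c * x (Sum.inr (Sum.inl i))))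
      (Sum.elim (fun i => c * x (Sum.inl i)) (fun _ => (1:ℝ))) i ^ 2)
      = c ^ 2 * ((∑ i, x i ^ 2) - x (Sum.inr (Sum.inr ())) ^ 2) + 1 := by
  simp only [Fintype.sum_sum_type, Sum.elim_inl, Sum.elim_inr]
  have h1 : ∑ a : Fin N, (-(c * x (Sum.inr (Sum.inl a)))) ^ 2
      = c ^ 2 * ∑ a : Fin N, x (Sum.inr (Sum.inl a)) ^ 2 := by
    rw [Finset.mul_sum]; exact Finset.sum_congr rfl fun a _ => by ring
  have h2 : ∑ a : Fin N, (c * x (Sum.inl a)) ^ 2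
      = c ^ 2 * ∑ a : Fin N, x (Sum.inl a) ^ 2 := by
    rw [Finset.mul_sum]; exact Finset.sum_congr rfl fun a _ => by ring
  rw [h1]
  simp [h2]
  ring

lemma coord_sum (y : E) (j : Fin N ⊕ Fin N ⊕ Unit) :
    (∑ a : Fin N, if Sum.inl a = j then y (Sum.inl a) else 0) +
      ((∑ a : Fin N, if Sum.inr (Sum.inl a) = j then y (Sum.inr (Sum.inl a)) else 0) +
        if Sum.inr (Sum.inr PUnit.unit) = j then y (Sum.inr (Sum.inr PUnit.unit)) else 0) = y j := by
  rcases j with b | b | v <;> simp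

/- ### The two main computations -/

lemma charOp_u (R : ℝ) (hR : 0 < R) (x : E) (hx : ‖x‖ < R) :
    charOp (fun x : E => -Real.sqrt (R ^ 2 - (x (Sum.inr (Sum.inr ()))) ^ 2)) x = 1 / R := by
  have hxx : ‖x‖ ^ 2 < R ^ 2 := by
    have := norm_nonneg x; nlinarith
  have ht2 : (x (Sum.inr (Sum.inr ()))) ^ 2 < R ^ 2 := by
    have h1 : (x (Sum.inr (Sum.inr ()))) ^ 2 ≤ ∑ i, x i ^ 2 :=
      Finset.single_le_sum (f := fun i => x i ^ 2) (fun i _ => sq_nonneg _) (Finset.mem_univ _)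
    rw [← norm_sq_eq] at h1
    linarith
  have hd : 0 < R ^ 2 - (x (Sum.inr (Sum.inr ()))) ^ 2 := by linarith
  set d : ℝ := R ^ 2 - (x (Sum.inr (Sum.inr ()))) ^ 2 with hd_def
  have hw : 0 < Real.sqrt d := Real.sqrt_pos.2 hd
  have hw2 : Real.sqrt d ^ 2 = d := Real.sq_sqrt hd.le
  have hp : ∀ j, fderiv ℝ (fun x : E => -Real.sqrt (R ^ 2 - (x (Sum.inr (Sum.inr ()))) ^ 2)) x
      (EuclideanSpace.single j 1)
      = (if (Sum.inr (Sum.inr ()) : Fin N ⊕ Fin N ⊕ Unit) = j then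
          x (Sum.inr (Sum.inr ())) / Real.sqrt d else 0) := by
    intro j
    rw [(hasFDerivAt_u R x ht2).fderiv]
    simp [EuclideanSpace.single_apply, hd_def]
  have hS : IsOpen {y : E | (y (Sum.inr (Sum.inr ()))) ^ 2 < R ^ 2} := by
    have hc : Continuous (fun y : E => y (Sum.inr (Sum.inr ()))) :=
      ((EuclideanSpace.proj (Sum.inr (Sum.inr ()) : Fin N ⊕ Fin N ⊕ Unit) : E →L[ℝ] ℝ)).continuous
    exact isOpen_lt (hc.pow 2) continuous_const
  have hH : ∀ i j, fderiv ℝ (fun w : E =>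
        fderiv ℝ (fun x : E => -Real.sqrt (R ^ 2 - (x (Sum.inr (Sum.inr ()))) ^ 2)) w
          (EuclideanSpace.single j 1)) x (EuclideanSpace.single i 1)
      = (if (Sum.inr (Sum.inr ()) : Fin N ⊕ Fin N ⊕ Unit) = j then 1 else 0) *
        (if (Sum.inr (Sum.inr ()) : Fin N ⊕ Fin N ⊕ Unit) = i then 1 else 0) *
        (R ^ 2 / Real.sqrt d ^ 3) := by
    intro i j
    have hev : (fun w : E =>
        fderiv ℝ (fun x : E => -Real.sqrt (R ^ 2 - (x (Sum.inr (Sum.inr ()))) ^ 2)) w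
          (EuclideanSpace.single j 1)) =ᶠ[nhds x]
        (fun w : E => (if (Sum.inr (Sum.inr ()) : Fin N ⊕ Fin N ⊕ Unit) = j then 1 else 0) *
          (w (Sum.inr (Sum.inr ())) / Real.sqrt (R ^ 2 - (w (Sum.inr (Sum.inr ()))) ^ 2))) := by
      refine Filter.eventuallyEq_of_mem (hS.mem_nhds ht2) (fun y hy => ?_)
      rw [(hasFDerivAt_u R y hy).fderiv]
      simp [EuclideanSpace.single_apply]
    rw [hev.fderiv_eq]
    rw [((hasFDerivAt_uderiv R x ht2).const_mul
      ((if (Sum.inr (Sum.inr ()) : Fin N ⊕ Fin N ⊕ Unit) = j then (1:ℝ) else 0))).fderiv]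
    clear hev hp
    rcases eq_or_ne (Sum.inr (Sum.inr ()) : Fin N ⊕ Fin N ⊕ Unit) j with hj | hj <;>
      rcases eq_or_ne (Sum.inr (Sum.inr ()) : Fin N ⊕ Fin N ⊕ Unit) i with hi | hi
    · subst hj; subst hi; simp [EuclideanSpace.single_apply, hd_def]
    · subst hj; simp [hi, EuclideanSpace.single_apply]
    · subst hi; simp [hj, EuclideanSpace.single_apply]
    · simp [hj, hi, EuclideanSpace.single_apply]
  simp only [charOp]
  simp only [hp, hH]
  rw [Fintype.sum_sum_type, Fintype.sum_sum_type]
  simp [Fintype.sum_sum_type]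
  have hden : (1 + (x (Sum.inr (Sum.inr ())) / Real.sqrt d) ^ 2) = (R / Real.sqrt d) ^ 2 := by
    rw [div_pow, div_pow, hw2]
    field_simp
    rw [hd_def]; ring
  rw [hden, rpow_helper (by positivity)]
  rw [div_pow, div_div_div_eq]
  rw [show Real.sqrt d ^ 3 * R ^ 3 = (R ^ 2 * Real.sqrt d ^ 3) * R by ring]
  rw [div_mul_eq_div_div, div_self (by positivity), one_div]

lemma charOp_v (R : ℝ) (hR : 0 < R) (x : E) (hx : ‖x‖ < R) :
    charOp (fun x : E => -Real.sqrt (R ^ 2 - ‖x‖ ^ 2)) x = 1 / R := by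
  have hxx : ‖x‖ ^ 2 < R ^ 2 := by
    have := norm_nonneg x; nlinarith
  have hd : 0 < R ^ 2 - ‖x‖ ^ 2 := by linarith
  set d : ℝ := R ^ 2 - ‖x‖ ^ 2 with hd_def
  have hw : 0 < Real.sqrt d := Real.sqrt_pos.2 hd
  have hw2 : Real.sqrt d ^ 2 = d := Real.sq_sqrt hd.le
  have hp : ∀ j, fderiv ℝ (fun x : E => -Real.sqrt (R ^ 2 - ‖x‖ ^ 2)) x
      (EuclideanSpace.single j 1) = (Real.sqrt d)⁻¹ * x j := by
    intro j
    rw [(hasFDerivAt_v R x hxx).fderiv]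
    simp [EuclideanSpace.inner_single_right]
    exact Or.inl rfl
  have hS : IsOpen {y : E | ‖y‖ ^ 2 < R ^ 2} :=
    isOpen_lt (continuous_norm.pow 2) continuous_const
  have hH : ∀ i j, fderiv ℝ (fun w : E =>
        fderiv ℝ (fun x : E => -Real.sqrt (R ^ 2 - ‖x‖ ^ 2)) w
          (EuclideanSpace.single j 1)) x (EuclideanSpace.single i 1)
      = (if j = i then (Real.sqrt d)⁻¹ else 0) + x j * x i * (Real.sqrt d ^ 3)⁻¹ := by
    intro i j
    have hev : (fun w : E =>
        fderiv ℝ (fun x : E => -Real.sqrt (R ^ 2 - ‖x‖ ^ 2)) w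
          (EuclideanSpace.single j 1)) =ᶠ[nhds x]
        (fun w : E => (Real.sqrt (R ^ 2 - ‖w‖ ^ 2))⁻¹ * w j) := by
      refine Filter.eventuallyEq_of_mem (hS.mem_nhds hxx) (fun y hy => ?_)
      rw [(hasFDerivAt_v R y hy).fderiv]
      simp [EuclideanSpace.inner_single_right]
    rw [hev.fderiv_eq, (hasFDerivAt_vderiv R j x hxx).fderiv]
    rcases i with a | a | u <;> rcases j with b | b | v <;>
      simp [EuclideanSpace.single_apply, EuclideanSpace.inner_single_right] <;>
      (try split) <;> (try subst_vars) <;> ring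
  simp only [charOp]
  simp only [hp, hH]
  rw [sum_quad, S1_lemma x ((Real.sqrt d)⁻¹), S2_lemma x ((Real.sqrt d)⁻¹)]
  have hsum : (∑ i, ((Real.sqrt d)⁻¹ * x i) ^ 2) = ‖x‖ ^ 2 / d := by
    rw [Finset.sum_congr rfl (fun i _ => by ring :
      ∀ i ∈ Finset.univ, ((Real.sqrt d)⁻¹ * x i) ^ 2 = x i ^ 2 * ((Real.sqrt d ^ 2)⁻¹)),
      ← Finset.sum_mul, hw2, ← norm_sq_eq, div_eq_mul_inv]
  rw [hsum, ← norm_sq_eq]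
  have hnum : (Real.sqrt d)⁻¹ * ((Real.sqrt d)⁻¹ ^ 2 * (‖x‖ ^ 2 - x (Sum.inr (Sum.inr ())) ^ 2) + 1)
      + (Real.sqrt d ^ 3)⁻¹ * x (Sum.inr (Sum.inr ())) ^ 2 = R ^ 2 / Real.sqrt d ^ 3 := by
    have hww : Real.sqrt d ≠ 0 := ne_of_gt hw
    have hw2' : Real.sqrt d ^ 2 = R ^ 2 - ‖x‖ ^ 2 := by rw [hw2]
    field_simp
    linear_combination hw2'
  rw [hnum]
  have hden : (1 + ‖x‖ ^ 2 / d) = (R / Real.sqrt d) ^ 2 := by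
    rw [div_pow, hw2]
    field_simp
    rw [hd_def]; ring
  rw [hden, rpow_helper (by positivity)]
  rw [div_pow, div_div_div_eq]
  rw [show Real.sqrt d ^ 3 * R ^ 3 = (R ^ 2 * Real.sqrt d ^ 3) * R by ring]
  rw [div_mul_eq_div_div, div_self (by positivity), one_div]

end Aux

/-- Failure of the Strong Comparison Principle for the characteristic curvature
operator: on `B(0,R) ⊂ ℝ^(2N+1)`, `u(x) = -√(R² - x_t²)` (where `x_t` is the
`t`-coordinate, the last one) and `v(x) = -√(R² - |x|²)` satisfy
`𝒯u = 𝒯v = 1/R` on `B`, `u ≤ v` on `B`, yet `u = v` at every point having only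
the `t`-coordinate nonzero. -/
theorem strong_comparison_fails (N : ℕ) (R : ℝ) (hR : 0 < R)
    (u v : EuclideanSpace ℝ (Fin N ⊕ Fin N ⊕ Unit) → ℝ)
    (hu : u = fun x => -Real.sqrt (R ^ 2 - (x (Sum.inr (Sum.inr ()))) ^ 2))
    (hv : v = fun x => -Real.sqrt (R ^ 2 - ‖x‖ ^ 2)) :
    (∀ x ∈ Metric.ball (0 : EuclideanSpace ℝ (Fin N ⊕ Fin N ⊕ Unit)) R,
        charOp u x = 1 / R ∧ charOp v x = 1 / R ∧ u x ≤ v x) ∧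
    (∀ x ∈ Metric.ball (0 : EuclideanSpace ℝ (Fin N ⊕ Fin N ⊕ Unit)) R,
        (∀ i, i ≠ Sum.inr (Sum.inr ()) → x i = 0) → u x = v x) := by
  subst hu hv
  constructor
  · intro x hx
    have hx' : ‖x‖ < R := by simpa using mem_ball_zero_iff.1 hx
    refine ⟨charOp_u R hR x hx', charOp_v R hR x hx', ?_⟩
    have h1 : (x (Sum.inr (Sum.inr ()))) ^ 2 ≤ ‖x‖ ^ 2 := by
      rw [norm_sq_eq]
      exact Finset.single_le_sum (f := fun i => x i ^ 2) (fun i _ => sq_nonneg _)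
        (Finset.mem_univ _)
    simp only
    exact neg_le_neg (Real.sqrt_le_sqrt (by linarith))
  · intro x hx hzero
    have hnorm : ‖x‖ ^ 2 = (x (Sum.inr (Sum.inr ()))) ^ 2 := by
      rw [norm_sq_eq]
      exact Finset.sum_eq_single _ (fun i _ hne => by rw [hzero i hne]; ring)
        (fun h => absurd (Finset.mem_univ _) h)
    simp only [hnorm]
end
end
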